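/- arXiv:1412.1739 — 2 statements merged into one kernel-verified Lean document; each statement's English description precedes it below -/
import Mathlib

section
/- Let N be a finite f-near-ring. If u : N is a unit and k : ℕ is such that k • u ≠ 0, then k • u is a unit. Consequently the set of units of N is a union of (the nonzero parts of) cyclic additive subgroups of (N,+). -/
/-!
Let `p` be the additive order of `1`. Right distributivity gives `(j • 1) * a = j • a`, so
`c ↦ c.val • 1` embeds the commutative ring `ZMod p` multiplicatively into `N`, and
`k • u = (k • 1) * u`. It therefore suffices that every nonzero `(k : ZMod p)` is a unit.
If `c` is a unit of `ZMod p` other than `1`, its image acts on `N` without fixed points, so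
`x * (c - 1) = 0` forces `x = 0`; in the finite ring `ZMod p` this makes `c - 1` a unit.
Starting from the unit `1` and passing from a unit `n` to `n + 1 = -((-n) - 1)`, every
natural number is then either `0` or a unit in `ZMod p`.
-/

theorem natCast_eq_zero_or_isUnit_of_isUnit_sub_one {R : Type*} [Ring R]
    (h : ∀ c : R, IsUnit c → c ≠ 1 → IsUnit (c - 1)) (n : ℕ) :
    (n : R) = 0 ∨ IsUnit (n : R) := by
  induction n with
  | zero => exact .inl Nat.cast_zero
  | succ n ih =>
    rw [Nat.cast_succ]
    rcases ih with hn | hn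
    · exact .inr (by rw [hn, zero_add]; exact isUnit_one)
    by_cases hn1 : (n : R) + 1 = 0
    · exact .inl hn1
    have hneg : -(n : R) ≠ 1 := fun h ↦ hn1 (by rw [← neg_neg (n : R), h, neg_add_cancel])
    have hsucc : -(-(n : R) - 1) = n + 1 := by abel
    exact .inr (hsucc ▸ (h _ hn.neg hneg).neg)

section NearRing

variable {N : Type*} [AddGroup N] [Monoid N] (hdist : ∀ a b c : N, (a + b) * c = a * c + b * c)
include hdist

theorem zero_mul_of_add_mul (a : N) : 0 * a = 0 := by
  have h := hdist 0 0 a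
  rw [add_zero] at h
  exact left_eq_add.mp h

theorem nsmul_one_mul_of_add_mul (j : ℕ) (a : N) : (j • (1 : N)) * a = j • a := by
  induction j with
  | zero => rw [zero_nsmul, zero_nsmul, zero_mul_of_add_mul hdist]
  | succ j ih => rw [succ_nsmul, succ_nsmul, hdist, ih, one_mul]

noncomputable def zmodHom : ZMod (addOrderOf (1 : N)) →* N where
  toFun c := c.val • 1
  map_one' := by rw [ZMod.val_one_eq_one_mod, mod_addOrderOf_nsmul, one_nsmul]
  map_mul' a b := by
    rw [ZMod.val_mul, mod_addOrderOf_nsmul, nsmul_one_mul_of_add_mul hdist, mul_nsmul']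

theorem zmodHom_natCast (n : ℕ) : zmodHom hdist n = n • (1 : N) := by
  rw [zmodHom, MonoidHom.coe_mk, OneHom.coe_mk, ZMod.val_natCast, mod_addOrderOf_nsmul]

theorem zmodHom_zero : zmodHom hdist 0 = 0 := by
  rw [← Nat.cast_zero, zmodHom_natCast, zero_nsmul]

theorem zmodHom_injective [NeZero (addOrderOf (1 : N))] : Function.Injective (zmodHom hdist) := by
  intro c d h
  have hmod := nsmul_inj_mod.mp h
  rw [Nat.mod_eq_of_lt c.val_lt, Nat.mod_eq_of_lt d.val_lt] at hmod
  exact ZMod.val_injective _ hmod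

theorem isUnit_sub_one_of_fixedPointFree [NeZero (addOrderOf (1 : N))]
    (hf : ∀ u : N, IsUnit u → u ≠ 1 → ∀ n : N, n * u = n → n = 0)
    {c : ZMod (addOrderOf (1 : N))} (hc : IsUnit c) (hc1 : c ≠ 1) : IsUnit (c - 1) := by
  rw [isUnit_iff_mem_nonZeroDivisors_of_finite, mem_nonZeroDivisors_iff_right]
  intro x hx
  have hxc : x * c = x := by rwa [mul_sub_one, sub_eq_zero] at hx
  have hc_image : zmodHom hdist c ≠ 1 := fun h ↦
    hc1 (zmodHom_injective hdist (by rw [h, map_one]))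
  apply zmodHom_injective hdist
  rw [zmodHom_zero]
  exact hf _ (hc.map _) hc_image _ (by rw [← map_mul, hxc])

end NearRing

theorem stmt13_general {N : Type*} [AddGroup N] [Mul N] [One N] [Finite N]
    (hassoc : ∀ a b c : N, (a * b) * c = a * (b * c))
    (hdist : ∀ a b c : N, (a + b) * c = a * c + b * c)
    (honel : ∀ a : N, 1 * a = a) (honer : ∀ a : N, a * 1 = a)
    (hf : ∀ u : N, (∃ v : N, u * v = 1 ∧ v * u = 1) → u ≠ 1 →
      ∀ n : N, n * u = n → n = 0) :
    ∀ u : N, (∃ v : N, u * v = 1 ∧ v * u = 1) →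
      ∀ k : ℕ, k • u ≠ 0 → ∃ v : N, (k • u) * v = 1 ∧ v * (k • u) = 1 := by
  let _ : Monoid N :=
    { ‹Mul N›, ‹One N› with mul_assoc := hassoc, one_mul := honel, mul_one := honer }
  have : NeZero (addOrderOf (1 : N)) := ⟨(isOfFinAddOrder_of_finite (1 : N)).addOrderOf_pos.ne'⟩
  intro u hu k hk
  have hf_isUnit : ∀ u : N, IsUnit u → u ≠ 1 → ∀ n : N, n * u = n → n = 0 :=
    fun u hu ↦ hf u (isUnit_iff_exists.mp hu)
  have hku : k • u = zmodHom hdist k * u := by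
    rw [zmodHom_natCast, nsmul_one_mul_of_add_mul hdist]
  have hk0 : (k : ZMod (addOrderOf (1 : N))) ≠ 0 := fun h ↦
    hk (by rw [hku, h, zmodHom_zero, zero_mul_of_add_mul hdist])
  have hkunit : IsUnit (k : ZMod (addOrderOf (1 : N))) :=
    (natCast_eq_zero_or_isUnit_of_isUnit_sub_one
      (fun _ ↦ isUnit_sub_one_of_fixedPointFree hdist hf_isUnit) k).resolve_left hk0
  exact isUnit_iff_exists.mp (hku ▸ (hkunit.map _).mul (isUnit_iff_exists.mpr hu))

/-- In a finite f-near-ring, every nonzero additive multiple of a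
unit is again a unit; hence the units form a union of (nonzero parts of) cyclic
additive subgroups. -/
theorem stmt13 {N : Type*} [AddGroup N] [Mul N] [One N] [Finite N]
    (hassoc : ∀ a b c : N, (a * b) * c = a * (b * c))
    (hdist : ∀ a b c : N, (a + b) * c = a * c + b * c)
    (honel : ∀ a : N, 1 * a = a) (honer : ∀ a : N, a * 1 = a)
    (hzero : ∀ a : N, a * 0 = 0)
    (hf : ∀ u : N, (∃ v : N, u * v = 1 ∧ v * u = 1) → u ≠ 1 →
      ∀ n : N, n * u = n → n = 0) :
    ∀ u : N, (∃ v : N, u * v = 1 ∧ v * u = 1) →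
      ∀ k : ℕ, k • u ≠ 0 → ∃ v : N, (k • u) * v = 1 ∧ v * (k • u) = 1 :=
  stmt13_general hassoc hdist honel honer hf
end

section
/- Let N be a nontrivial f-near-ring satisfying the DCCN which is simple and not left distributive (there exist a, b, c : N with a*(b+c) ≠ a*b + a*c). Then every nonzero element of N is a unit, i.e. N is a near-field. -/
/-!
By the DCCN there is a minimal nonzero `N`-subgroup `M`, and simplicity makes `M` faithful, since
its annihilator is an ideal different from `N`. The DCCN applied to annihilators of finite subsets
then gives a finite `S ⊆ M` with zero annihilator; take one of least cardinality. For `γ ∈ S` the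
annihilator of `S \ {γ}` is nonzero, so it maps `γ` onto `M`, and summing such elements realises
every map `S → M` as `x ↦ n * x` (a density theorem). If `S` contained `γ₁ ≠ γ₂`, the element `u`
realising their transposition would be a unit `u ≠ 1` fixing the nonzero element `c` realising the
constant map `γ₁ - γ₂`, against the f-condition. So `M` contains some `x` with zero annihilator.
Then `H * x = M` for every nonzero `N`-subgroup `H`, which forces `H = N`; in particular `N * a = N`
for `a ≠ 0`, so every nonzero element has a left inverse, and such left inverses are two-sided.
-/

namespace NearRing

section RightDistrib

variable {N : Type*} [AddGroup N] [Mul N]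

def IsNSubgroup (H : AddSubgroup N) : Prop :=
  ∀ n : N, ∀ m ∈ H, n * m ∈ H

structure IsIdeal (I : AddSubgroup N) : Prop where
  add_sub_mem : ∀ n : N, ∀ i ∈ I, n + i - n ∈ I
  mul_mem : ∀ i ∈ I, ∀ n : N, i * n ∈ I
  mul_add_sub_mem : ∀ n m : N, ∀ i ∈ I, n * (m + i) - n * m ∈ I

abbrev IsMinimalNSubgroup (M : AddSubgroup N) : Prop :=
  Minimal (fun H : AddSubgroup N => IsNSubgroup H ∧ H ≠ ⊥) M

theorem wellFoundedOn_setOf_isNSubgroup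
    (hdcc : ∀ f : ℕ → AddSubgroup N, Antitone f → (∀ i, IsNSubgroup (f i)) →
      ∃ k, ∀ j ≥ k, f j = f k) :
    {H : AddSubgroup N | IsNSubgroup H}.WellFoundedOn (· < ·) := by
  rw [Set.wellFoundedOn_iff_no_descending_seq]
  intro f hf
  have hanti : StrictAnti f := fun _ _ hab => f.map_rel_iff.mpr hab
  obtain ⟨k, hk⟩ := hdcc f hanti.antitone hf
  exact (hanti k.lt_succ_self).ne (hk (k + 1) k.le_succ)

theorem exists_isMinimalNSubgroup
    (hwf : {H : AddSubgroup N | IsNSubgroup H}.WellFoundedOn (· < ·))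
    (hN : (⊤ : AddSubgroup N) ≠ ⊥) : ∃ M : AddSubgroup N, IsMinimalNSubgroup M :=
  (hwf.subset fun _ hH => hH.1).exists_minimal ⟨⊤, fun _ _ _ => trivial, hN⟩

variable [RightDistribClass N]

def mulRightHom (x : N) : N →+ N :=
  AddMonoidHom.mk' (· * x) fun a b => add_mul a b x

@[simp]
theorem mulRightHom_apply (x n : N) : mulRightHom x n = n * x := rfl

@[simp]
protected theorem zero_mul (x : N) : 0 * x = 0 :=
  (mulRightHom x).map_zero

protected theorem neg_mul (a x : N) : -a * x = -(a * x) :=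
  (mulRightHom x).map_neg a

protected theorem sub_mul (a b x : N) : (a - b) * x = a * x - b * x :=
  (mulRightHom x).map_sub a b

def annihilator (s : Set N) : AddSubgroup N where
  carrier := {n | ∀ x ∈ s, n * x = 0}
  zero_mem' x _ := NearRing.zero_mul x
  add_mem' {a b} ha hb x hx := by simp only [add_mul, ha x hx, hb x hx, add_zero]
  neg_mem' {a} ha x hx := by simp only [NearRing.neg_mul, ha x hx, neg_zero]

@[simp]
theorem mem_annihilator {s : Set N} {n : N} : n ∈ annihilator s ↔ ∀ x ∈ s, n * x = 0 :=
  Iff.rfl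

theorem annihilator_anti {s t : Set N} (hst : s ⊆ t) : annihilator t ≤ annihilator s :=
  fun _ hn x hx => hn x (hst hx)

theorem annihilator_singleton (x : N) : annihilator {x} = (mulRightHom x).ker := by
  ext n
  simp

theorem eq_of_annihilator_eq_bot {s : Set N} (hs : annihilator s = ⊥) {a b : N}
    (h : ∀ x ∈ s, a * x = b * x) : a = b := by
  have hab : a - b ∈ annihilator s := fun x hx => by rw [NearRing.sub_mul, h x hx, sub_self]
  rw [hs, AddSubgroup.mem_bot] at hab
  exact sub_eq_zero.mp hab

end RightDistrib

section Monoid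

variable {N : Type*} [AddGroup N] [Monoid N] [RightDistribClass N]

theorem isNSubgroup_annihilator (hzero : ∀ a : N, a * 0 = 0) (s : Set N) :
    IsNSubgroup (annihilator s) :=
  fun n m hm x hx => by rw [mul_assoc, hm x hx, hzero]

theorem IsNSubgroup.map_mulRightHom {H : AddSubgroup N} (hH : IsNSubgroup H) (x : N) :
    IsNSubgroup (H.map (mulRightHom x)) := by
  rintro n _ ⟨h, hh, rfl⟩
  exact ⟨n * h, hH n h hh, mul_assoc n h x⟩

theorem isIdeal_annihilator {H : AddSubgroup N} (hH : IsNSubgroup H) :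
    IsIdeal (annihilator (H : Set N)) where
  add_sub_mem n i hi x hx := by rw [NearRing.sub_mul, add_mul, hi x hx, add_zero, sub_self]
  mul_mem i hi n x hx := by rw [mul_assoc, hi _ (hH n x hx)]
  mul_add_sub_mem n m i hi x hx := by
    rw [NearRing.sub_mul, mul_assoc, mul_assoc, add_mul, hi x hx, add_zero, sub_self]

theorem annihilator_eq_bot (hsimple : ∀ I : AddSubgroup N, IsIdeal I → I = ⊥ ∨ I = ⊤)
    {H : AddSubgroup N} (hH : IsNSubgroup H) (hH0 : H ≠ ⊥) : annihilator (H : Set N) = ⊥ := by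
  refine (hsimple _ (isIdeal_annihilator hH)).resolve_right fun htop => hH0 ?_
  have hone : (1 : N) ∈ annihilator (H : Set N) := htop ▸ AddSubgroup.mem_top 1
  exact (AddSubgroup.eq_bot_iff_forall H).mpr fun x hx => by simpa using hone x hx

theorem exists_finset_annihilator_eq (hzero : ∀ a : N, a * 0 = 0)
    (hwf : {H : AddSubgroup N | IsNSubgroup H}.WellFoundedOn (· < ·)) (s : Set N) :
    ∃ S : Finset N, ↑S ⊆ s ∧ annihilator (S : Set N) = annihilator s := by
  classical
  let P : AddSubgroup N → Prop := fun A => ∃ S : Finset N, ↑S ⊆ s ∧ annihilator (S : Set N) = A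
  have hP : {A | P A} ⊆ {H | IsNSubgroup H} := by
    rintro _ ⟨S, -, rfl⟩
    exact isNSubgroup_annihilator hzero S
  obtain ⟨A, ⟨S, hSs, rfl⟩, hmin⟩ := (hwf.subset hP).exists_minimal ⟨_, ∅, by simp, rfl⟩
  refine ⟨S, hSs, le_antisymm (fun n hn y hy => ?_) (annihilator_anti hSs)⟩
  have hle : annihilator ↑(insert y S) ≤ annihilator (S : Set N) :=
    annihilator_anti (Finset.subset_insert y S)
  have hge := hmin ⟨insert y S, by simp [Set.insert_subset_iff, hy, hSs], rfl⟩ hle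
  exact hge hn y (Finset.mem_insert_self y S)

theorem IsMinimalNSubgroup.map_mulRightHom_eq {M H : AddSubgroup N} (hM : IsMinimalNSubgroup M)
    (hH : IsNSubgroup H) {x : N} (hxM : x ∈ M) (hHx : ¬H ≤ annihilator {x}) :
    H.map (mulRightHom x) = M := by
  refine hM.eq_of_le ⟨hH.map_mulRightHom x, ?_⟩ ?_
  · rwa [Ne, AddSubgroup.map_eq_bot_iff, ← annihilator_singleton]
  · rintro _ ⟨h, -, rfl⟩
    exact hM.prop.1 h x hxM

theorem exists_mul_eq_and_forall_mem_erase_mul_eq_zero [DecidableEq N]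
    (hzero : ∀ a : N, a * 0 = 0) {M : AddSubgroup N} {S : Finset N}
    (hM : IsMinimalNSubgroup M) (hSM : ↑S ⊆ (M : Set N)) (hS : annihilator (S : Set N) = ⊥)
    {γ : N} (hγ : γ ∈ S) (hSγ : annihilator (S.erase γ : Set N) ≠ ⊥) {t : N} (ht : t ∈ M) :
    ∃ j : N, j * γ = t ∧ ∀ x ∈ S.erase γ, j * x = 0 := by
  have hnot_le : ¬annihilator (S.erase γ : Set N) ≤ annihilator {γ} := fun hle => hSγ <| by
    refine eq_bot_iff.mpr fun n hn => hS ▸ fun x hx => ?_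
    obtain rfl | hxγ := eq_or_ne x γ
    · exact hle hn x rfl
    · exact hn x (Finset.mem_erase.mpr ⟨hxγ, hx⟩)
  have hmap := hM.map_mulRightHom_eq (isNSubgroup_annihilator hzero _) (hSM hγ) hnot_le
  obtain ⟨j, hj, hjt⟩ := hmap ▸ ht
  exact ⟨j, hjt, hj⟩

theorem exists_mul_eq_on [DecidableEq N] (hzero : ∀ a : N, a * 0 = 0)
    {M : AddSubgroup N} {S : Finset N} (hM : IsMinimalNSubgroup M) (hSM : ↑S ⊆ (M : Set N))
    (hS : annihilator (S : Set N) = ⊥) (hSerase : ∀ γ ∈ S, annihilator (S.erase γ : Set N) ≠ ⊥)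
    (g : N → N) (hg : ∀ x ∈ S, g x ∈ M) :
    ∃ n : N, ∀ x ∈ S, n * x = g x := by
  suffices ∀ T ⊆ S, ∃ n : N, ∀ x ∈ S, n * x = if x ∈ T then g x else 0 by
    obtain ⟨n, hn⟩ := this S subset_rfl
    exact ⟨n, fun x hx => by simpa [hx] using hn x hx⟩
  intro T hT
  induction T using Finset.induction_on with
  | empty => exact ⟨0, fun x _ => by simp⟩
  | insert γ T hγT ih =>
    obtain ⟨n, hn⟩ := ih ((Finset.subset_insert γ T).trans hT)
    have hγS := hT (Finset.mem_insert_self γ T)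
    obtain ⟨j, hjγ, hj⟩ := exists_mul_eq_and_forall_mem_erase_mul_eq_zero hzero hM hSM hS hγS
      (hSerase γ hγS) (hg γ hγS)
    refine ⟨n + j, fun x hx => ?_⟩
    rw [add_mul, hn x hx]
    obtain rfl | hxγ := eq_or_ne x γ
    · simp [hγT, hjγ]
    · simp [hxγ, hj x (Finset.mem_erase.mpr ⟨hxγ, hx⟩)]

theorem card_le_one_of_exists_mul_eq_on
    (hf : ∀ u : N, IsUnit u → u ≠ 1 → ∀ n : N, n * u = n → n = 0)
    {M : AddSubgroup N} {S : Finset N} (hSM : ↑S ⊆ (M : Set N)) (hS : annihilator (S : Set N) = ⊥)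
    (hinterp : ∀ g : N → N, (∀ x ∈ S, g x ∈ M) → ∃ n : N, ∀ x ∈ S, n * x = g x) :
    S.card ≤ 1 := by
  classical
  by_contra! hcard
  obtain ⟨γ₁, hγ₁, γ₂, hγ₂, hne⟩ := Finset.one_lt_card.mp hcard
  set σ := Equiv.swap γ₁ γ₂
  have hσS : ∀ x ∈ S, σ x ∈ S := fun x hx => by
    rw [Equiv.swap_apply_def]
    split_ifs <;> assumption
  obtain ⟨u, hu⟩ := hinterp σ fun x hx => hSM (hσS x hx)
  obtain ⟨c, hc⟩ := hinterp (fun _ => γ₁ - γ₂) fun _ _ => M.sub_mem (hSM hγ₁) (hSM hγ₂)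
  have huu : u * u = 1 := eq_of_annihilator_eq_bot hS fun x hx => by
    rw [mul_assoc, hu x hx, hu _ (hσS x hx), Equiv.swap_apply_self, one_mul]
  have hcu : c * u = c := eq_of_annihilator_eq_bot hS fun x hx => by
    rw [mul_assoc, hu x hx, hc _ (hσS x hx), hc x hx]
  have hu1 : u ≠ 1 := fun h => hne <| by
    simpa [h, σ] using hu γ₁ hγ₁
  have hc0 : c ≠ 0 := fun h => sub_ne_zero.mpr hne <| by
    simpa [h] using (hc γ₁ hγ₁).symm
  exact hc0 (hf u ⟨⟨u, u, huu, huu⟩, rfl⟩ hu1 c hcu)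

theorem IsMinimalNSubgroup.exists_annihilator_singleton_eq_bot (hzero : ∀ a : N, a * 0 = 0)
    (hwf : {H : AddSubgroup N | IsNSubgroup H}.WellFoundedOn (· < ·))
    (hsimple : ∀ I : AddSubgroup N, IsIdeal I → I = ⊥ ∨ I = ⊤)
    (hf : ∀ u : N, IsUnit u → u ≠ 1 → ∀ n : N, n * u = n → n = 0)
    {M : AddSubgroup N} (hM : IsMinimalNSubgroup M) :
    ∃ x ∈ M, annihilator {x} = ⊥ := by
  classical
  obtain ⟨S₀, hS₀M, hS₀⟩ := exists_finset_annihilator_eq hzero hwf M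
  rw [annihilator_eq_bot hsimple hM.prop.1 hM.prop.2] at hS₀
  obtain ⟨S, ⟨hSM, hS⟩, hSmin⟩ := exists_minimalFor_of_wellFoundedLT
    (fun S : Finset N => ↑S ⊆ (M : Set N) ∧ annihilator (S : Set N) = ⊥) Finset.card
    ⟨S₀, hS₀M, hS₀⟩
  have herase : ∀ γ ∈ S, annihilator (S.erase γ : Set N) ≠ ⊥ := fun γ hγ h =>
    have hlt := Finset.card_erase_lt_of_mem hγ
    hlt.not_ge (hSmin ⟨(Finset.coe_subset.mpr (Finset.erase_subset γ S)).trans hSM, h⟩ hlt.le)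
  have hcard := card_le_one_of_exists_mul_eq_on hf hSM hS (exists_mul_eq_on hzero hM hSM hS herase)
  have hSne : S.Nonempty := Finset.nonempty_iff_ne_empty.mpr fun hempty => hM.prop.2 <| by
    rw [hempty, Finset.coe_empty] at hS
    exact eq_bot_iff.mpr fun m _ => hS ▸ fun x hx => hx.elim
  obtain ⟨x, rfl⟩ := Finset.card_eq_one.mp (le_antisymm hcard hSne.card_pos)
  exact ⟨x, hSM (Finset.mem_singleton_self x), by simpa using hS⟩

theorem IsMinimalNSubgroup.eq_top {M H : AddSubgroup N} (hM : IsMinimalNSubgroup M) {x : N}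
    (hxM : x ∈ M) (hx : annihilator {x} = ⊥) (hH : IsNSubgroup H) (hH0 : H ≠ ⊥) : H = ⊤ := by
  have hmap := hM.map_mulRightHom_eq hH hxM fun hle => hH0 (eq_bot_iff.mpr (hx ▸ hle))
  refine eq_top_iff.mpr fun z _ => ?_
  obtain ⟨h, hh, hhz⟩ := hmap ▸ hM.prop.1 z x hxM
  obtain rfl : h = z := eq_of_annihilator_eq_bot hx (by simpa using hhz)
  exact hh

theorem exists_mul_eq_one_of_forall_eq_top
    (htop : ∀ H : AddSubgroup N, IsNSubgroup H → H ≠ ⊥ → H = ⊤) {a : N} (ha : a ≠ 0) :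
    ∃ z : N, z * a = 1 := by
  have hrange : (mulRightHom a).range = ⊤ := by
    refine htop _ ?_ fun h => ha ?_
    · rintro n _ ⟨m, rfl⟩
      exact ⟨n * m, mul_assoc n m a⟩
    · exact AddSubgroup.mem_bot.mp (h ▸ ⟨1, one_mul a⟩)
  obtain ⟨z, hz⟩ : (1 : N) ∈ (mulRightHom a).range := hrange ▸ AddSubgroup.mem_top 1
  exact ⟨z, hz⟩

theorem exists_mul_eq_one_and_mul_eq_one (hleft : ∀ a : N, a ≠ 0 → ∃ z : N, z * a = 1)
    {a : N} (ha : a ≠ 0) : ∃ y : N, a * y = 1 ∧ y * a = 1 := by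
  obtain ⟨z, hza⟩ := hleft a ha
  have hz : z ≠ 0 := fun h => ha <| by
    rw [← one_mul a, ← hza, h, NearRing.zero_mul, NearRing.zero_mul]
  obtain ⟨w, hwz⟩ := hleft z hz
  exact ⟨z, left_inv_eq_right_inv hwz hza ▸ hwz, hza⟩

end Monoid

end NearRing

open NearRing

theorem stmt15_general {N : Type*} [AddGroup N] [Mul N] [One N]
    (hassoc : ∀ a b c : N, (a * b) * c = a * (b * c))
    (hdist : ∀ a b c : N, (a + b) * c = a * c + b * c)
    (honel : ∀ a : N, 1 * a = a) (honer : ∀ a : N, a * 1 = a)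
    (hzero : ∀ a : N, a * 0 = 0)
    (hf : ∀ u : N, (∃ v : N, u * v = 1 ∧ v * u = 1) → u ≠ 1 →
      ∀ n : N, n * u = n → n = 0)
    (hdcc : ∀ f : ℕ → AddSubgroup N, Antitone f →
      (∀ i : ℕ, ∀ n : N, ∀ m ∈ f i, n * m ∈ f i) →
      ∃ k : ℕ, ∀ j ≥ k, f j = f k)
    (hsimple : ∀ I : AddSubgroup N,
      (∀ n : N, ∀ i ∈ I, n + i - n ∈ I) →
      (∀ i ∈ I, ∀ n : N, i * n ∈ I) →
      (∀ n m : N, ∀ i ∈ I, n * (m + i) - n * m ∈ I) →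
      I = ⊥ ∨ I = ⊤) :
    ∀ x : N, x ≠ 0 → ∃ y : N, x * y = 1 ∧ y * x = 1 := by
  let _ : Monoid N := { mul_assoc := hassoc, one_mul := honel, mul_one := honer }
  have : RightDistribClass N := ⟨hdist⟩
  intro a ha
  have hwf := wellFoundedOn_setOf_isNSubgroup hdcc
  obtain ⟨M, hM⟩ : ∃ M : AddSubgroup N, IsMinimalNSubgroup M :=
    exists_isMinimalNSubgroup hwf fun h => ha (AddSubgroup.mem_bot.mp (h ▸ AddSubgroup.mem_top a))
  obtain ⟨x, hxM, hx⟩ := hM.exists_annihilator_singleton_eq_bot hzero hwf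
    (fun I hI => hsimple I hI.1 hI.2 hI.3) (fun u hu => hf u (isUnit_iff_exists.mp hu))
  exact exists_mul_eq_one_and_mul_eq_one
    (fun b hb => exists_mul_eq_one_of_forall_eq_top (fun H => hM.eq_top hxM hx) hb) ha

/-- A simple f-near-ring with DCCN which is not left distributive
is a near-field. -/
theorem stmt15 {N : Type*} [AddGroup N] [Mul N] [One N]
    (hassoc : ∀ a b c : N, (a * b) * c = a * (b * c))
    (hdist : ∀ a b c : N, (a + b) * c = a * c + b * c)
    (honel : ∀ a : N, 1 * a = a) (honer : ∀ a : N, a * 1 = a)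
    (hzero : ∀ a : N, a * 0 = 0)
    (hf : ∀ u : N, (∃ v : N, u * v = 1 ∧ v * u = 1) → u ≠ 1 →
      ∀ n : N, n * u = n → n = 0)
    (hnt : (0 : N) ≠ 1)
    (hdcc : ∀ f : ℕ → AddSubgroup N, Antitone f →
      (∀ i : ℕ, ∀ n : N, ∀ m ∈ f i, n * m ∈ f i) →
      ∃ k : ℕ, ∀ j ≥ k, f j = f k)
    (hsimple : ∀ I : AddSubgroup N,
      (∀ n : N, ∀ i ∈ I, n + i - n ∈ I) →
      (∀ i ∈ I, ∀ n : N, i * n ∈ I) →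
      (∀ n m : N, ∀ i ∈ I, n * (m + i) - n * m ∈ I) →
      I = ⊥ ∨ I = ⊤)
    (hnld : ∃ a b c : N, a * (b + c) ≠ a * b + a * c) :
    ∀ x : N, x ≠ 0 → ∃ y : N, x * y = 1 ∧ y * x = 1 :=
  stmt15_general hassoc hdist honel honer hzero hf hdcc hsimple
end
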